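/- Transition matrix for the multiplicative rational Toda system: let z0, a, b, c, α, β, λ ∈ ℂ with α ≠ 0, β ≠ 0 and all expressions appearing as denominators below nonzero. Define L(z, w, γ, λ) := [[1, w − z + γ], [λγ/(w − z − γ), (w − z + γ)/(w − z − γ)]] and A(z) := [[1, z], [0, 1]]. If the shifted ratio equation ((z0 − a + α)(b − c + α))/((a − b − β)(c − z0 − β)) = α/β holds, then A(c) · L(c, z0, β, λ) · L(z0, a, α, λ) · A(a)⁻¹ = [[1, (β − α)(z0 + b − α − β)/(z0 − b + α − β)], [0, (z0 − b − α + β)/(z0 − b + α − β)]] + (λ/(z0 − b + α − β)) · [[β·b − α·z0, (α − β)(z0·b − αβ)], [β − α, α·b − β·z0]]; in particular this product depends only on z0, b, α, β, λ. -/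

import Mathlib

open Matrix

/-- Transition matrix of the shifted ratio system. -/
noncomputable def srL (z w γ lam : ℂ) : Matrix (Fin 2) (Fin 2) ℂ :=
  !![1, w - z + γ;
     lam * γ / (w - z - γ), (w - z + γ) / (w - z - γ)]

/-- Gauge matrix. -/
def gaugeA (z : ℂ) : Matrix (Fin 2) (Fin 2) ℂ :=
  !![1, z; 0, 1]

/-!
After multiplying by the three denominators `(z0 - c - β)`, `(a - z0 - α)`, `(z0 - b + α - β)`,
the difference between the gauged product of the two transition matrices and the claimed matrix is
the shifted ratio polynomial `(z0 - a + α)(b - c + α)β - α(a - b - β)(c - z0 - β)` times a fixed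
matrix.
-/

theorem mul_eq_mul_of_div_eq_div_of_ne_zero {G₀ : Type*} [CommGroupWithZero G₀] {a b c d : G₀}
    (hc : c ≠ 0) (hd : d ≠ 0) (h : a / b = c / d) : a * d = c * b := by
  have hb : b ≠ 0 := by
    rintro rfl
    exact div_ne_zero hc hd (by simpa using h.symm)
  exact (div_eq_div_iff hb hd).1 h

theorem gaugeA_mul_gaugeA (z w : ℂ) : gaugeA z * gaugeA w = gaugeA (z + w) := by
  simp [gaugeA, add_comm]

theorem gaugeA_inv (z : ℂ) : (gaugeA z)⁻¹ = gaugeA (-z) :=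
  inv_eq_right_inv (by rw [gaugeA_mul_gaugeA, add_neg_cancel]; simp [gaugeA, one_fin_two])

noncomputable def todaTransition (z0 b α β lam : ℂ) : Matrix (Fin 2) (Fin 2) ℂ :=
  !![1, (β - α) * (z0 + b - α - β) / (z0 - b + α - β);
     0, (z0 - b - α + β) / (z0 - b + α - β)] +
    (lam / (z0 - b + α - β)) •
      !![β * b - α * z0, (α - β) * (z0 * b - α * β);
         β - α, α * b - β * z0]

theorem smul_sub_todaTransition_eq (z0 a b c α β lam : ℂ)
    (hc : z0 - c - β ≠ 0) (ha : a - z0 - α ≠ 0) (hb : z0 - b + α - β ≠ 0) :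
    ((z0 - c - β) * (a - z0 - α) * (z0 - b + α - β)) •
        (gaugeA c * srL c z0 β lam * srL z0 a α lam * gaugeA (-a) - todaTransition z0 b α β lam) =
      ((z0 - a + α) * (b - c + α) * β - α * ((a - b - β) * (c - z0 - β))) •
        !![lam * (z0 - β), (z0 - β) * (2 - lam * (z0 + α));
           lam, 2 - lam * (z0 + α)] := by
  ext i j
  fin_cases i <;> fin_cases j <;>
    simp only [gaugeA, srL, todaTransition, mul_apply, Fin.sum_univ_two, Matrix.sub_apply,
      Matrix.add_apply, Matrix.smul_apply, of_apply, cons_val', cons_val_zero, cons_val_one,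
      cons_val_fin_one, smul_eq_mul, Fin.zero_eta, Fin.mk_one, Fin.isValue] <;>
    field_simp <;> ring

theorem multiplicative_rational_Toda_transition_matrix_general
    (z0 a b c α β lam : ℂ)
    (hα : α ≠ 0) (hβ : β ≠ 0)
    (h1 : z0 - c - β ≠ 0) (h2 : a - z0 - α ≠ 0)
    (h5 : z0 - b + α - β ≠ 0)
    (hsr : (z0 - a + α) * (b - c + α) / ((a - b - β) * (c - z0 - β)) = α / β) :
    gaugeA c * srL c z0 β lam * srL z0 a α lam * (gaugeA a)⁻¹ =
      !![1, (β - α) * (z0 + b - α - β) / (z0 - b + α - β);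
         0, (z0 - b - α + β) / (z0 - b + α - β)] +
        (lam / (z0 - b + α - β)) •
          !![β * b - α * z0, (α - β) * (z0 * b - α * β);
             β - α, α * b - β * z0] := by
  have hratio : (z0 - a + α) * (b - c + α) * β - α * ((a - b - β) * (c - z0 - β)) = 0 :=
    sub_eq_zero.2 (mul_eq_mul_of_div_eq_div_of_ne_zero hα hβ hsr)
  have hdefect := smul_sub_todaTransition_eq z0 a b c α β lam h1 h2 h5
  rw [hratio, zero_smul, smul_eq_zero_iff_right (mul_ne_zero (mul_ne_zero h1 h2) h5),
    sub_eq_zero] at hdefect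
  rw [gaugeA_inv]
  exact hdefect

theorem multiplicative_rational_Toda_transition_matrix
    (z0 a b c α β lam : ℂ)
    (hα : α ≠ 0) (hβ : β ≠ 0)
    (h1 : z0 - c - β ≠ 0) (h2 : a - z0 - α ≠ 0)
    (h3 : a - b - β ≠ 0) (h4 : c - z0 - β ≠ 0)
    (h5 : z0 - b + α - β ≠ 0)
    (hsr : (z0 - a + α) * (b - c + α) / ((a - b - β) * (c - z0 - β)) = α / β) :
    gaugeA c * srL c z0 β lam * srL z0 a α lam * (gaugeA a)⁻¹ =
      !![1, (β - α) * (z0 + b - α - β) / (z0 - b + α - β);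
         0, (z0 - b - α + β) / (z0 - b + α - β)] +
        (lam / (z0 - b + α - β)) •
          !![β * b - α * z0, (α - β) * (z0 * b - α * β);
             β - α, α * b - β * z0] :=
  multiplicative_rational_Toda_transition_matrix_general z0 a b c α β lam hα hβ h1 h2 h5 hsr
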